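/- Let k ≥ 1, let v_1^{(k)},…,v_{2^k}^{(k)} ∈ ℝ^{2^k−1} be the columns of the Walsh matrix W_k with its first row deleted, viewed as points of the metric space ({v_1,…,v_{2^k}} ∪ {0}, ‖·‖_2). If F maps this space to (ℝ^{2^k−1}, ‖·‖_1) with F(v_ℓ) = v_ℓ for all ℓ, then Lip(F) ≥ √(2 − 2^{1−k}) · Lip(f), where f is the restriction of F to {v_1,…,v_{2^k}} (so Lip(f) = √(2^{k−1}) with respect to the Euclidean source metric and ℓ^1 target norm). -/
import Mathlib


/-- Reindexing equivalence `Fin (2^k) ⊕ Fin (2^k) ≃ Fin (2^(k+1))`. -/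
def walshEquiv (k : ℕ) : Fin (2 ^ k) ⊕ Fin (2 ^ k) ≃ Fin (2 ^ (k + 1)) :=
  finSumFinEquiv.trans (finCongr (by rw [pow_succ, mul_two]))

/-- The Walsh matrices: `W 0 = (1)` and `W (k+1) = [[W k, W k],[W k, -W k]]`. -/
def walsh : (k : ℕ) → Matrix (Fin (2 ^ k)) (Fin (2 ^ k)) ℝ
  | 0 => fun _ _ => 1
  | k + 1 =>
    Matrix.reindex (walshEquiv k) (walshEquiv k)
      (Matrix.fromBlocks (walsh k) (walsh k) (walsh k) (-(walsh k)))

/-- The `ℓ`-th column of `W k` with its first row deleted, a vector in `ℝ^(2^k - 1)`. -/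
def walshCol (k : ℕ) (ℓ : Fin (2 ^ k)) : Fin (2 ^ k - 1) → ℝ :=
  fun r => walsh k (Fin.cast (Nat.sub_add_cancel Nat.one_le_two_pow) r.succ) ℓ

lemma walshEquiv_inl_zero (k : ℕ) : walshEquiv k (Sum.inl 0) = 0 := by
  apply Fin.ext; simp [walshEquiv]

lemma walsh_abs : ∀ k (i j : Fin (2^k)), |walsh k i j| = 1
  | 0, i, j => by simp [walsh]
  | k+1, i, j => by
    rw [walsh]
    rcases h : (walshEquiv k).symm i with a | a <;> rcases h' : (walshEquiv k).symm j with b | b <;>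
      simp [Matrix.reindex_apply, h, h', walsh_abs k]

lemma walsh_zero_apply : ∀ k (j : Fin (2^k)), walsh k 0 j = 1
  | 0, j => rfl
  | k+1, j => by
    rw [walsh]
    have h0 : (walshEquiv k).symm 0 = Sum.inl 0 := by
      rw [Equiv.symm_apply_eq, walshEquiv_inl_zero]
    rcases h' : (walshEquiv k).symm j with b | b <;>
      simp [Matrix.reindex_apply, h0, h', walsh_zero_apply k]

lemma walsh_row_sum : ∀ k (i : Fin (2^k)), i ≠ 0 → ∑ j, walsh k i j = 0
  | 0, i, hi => absurd (Fin.fin_one_eq_zero i) hi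
  | k+1, i, hi => by
    rw [← (walshEquiv k).sum_comp (fun j => walsh (k+1) i j), Fintype.sum_sum_type]
    rcases h : (walshEquiv k).symm i with a | a
    · have ha : a ≠ 0 := by
        rintro rfl
        exact hi (by rw [← walshEquiv_inl_zero k, ← h, Equiv.apply_symm_apply])
      simp [walsh, Matrix.reindex_apply, h, walsh_row_sum k a ha]
    · simp [walsh, Matrix.reindex_apply, h]

lemma walshCol_sq_sum (k : ℕ) (ℓ : Fin (2^k)) :
    ∑ r, (walshCol k ℓ r)^2 = (2:ℝ)^k - 1 := by
  have h1 : (1:ℕ) ≤ 2^k := Nat.one_le_two_pow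
  have h : ∀ r : Fin (2^k-1), (walshCol k ℓ r)^2 = 1 := fun r => by
    rw [← sq_abs, show |walshCol k ℓ r| = 1 from walsh_abs k _ ℓ]; norm_num
  rw [Finset.sum_congr rfl fun r _ => h r, Finset.sum_const, Finset.card_univ,
    Fintype.card_fin, nsmul_eq_mul, mul_one, Nat.cast_sub h1]
  push_cast; ring

lemma key_coord (k : ℕ) (c : ℝ) (i : Fin (2^k)) (hi : i ≠ 0) :
    (2:ℝ)^k ≤ ∑ ℓ, |walsh k i ℓ - c| := by
  have h : ∀ ℓ, 1 - walsh k i ℓ * c ≤ |walsh k i ℓ - c| := by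
    intro ℓ
    have hw : |walsh k i ℓ| = 1 := walsh_abs k i ℓ
    have h2 : (walsh k i ℓ)^2 = 1 := by rw [← sq_abs, hw]; norm_num
    have hmul : walsh k i ℓ * (walsh k i ℓ - c) = 1 - walsh k i ℓ * c := by
      rw [mul_sub, ← sq, h2]
    calc 1 - walsh k i ℓ * c ≤ |1 - walsh k i ℓ * c| := le_abs_self _
    _ = |walsh k i ℓ| * |walsh k i ℓ - c| := by rw [← abs_mul, hmul]
    _ = |walsh k i ℓ - c| := by rw [hw, one_mul]
  calc (2:ℝ)^k = ∑ ℓ : Fin (2^k), (1 - walsh k i ℓ * c) := by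
        rw [Finset.sum_sub_distrib, ← Finset.sum_mul, walsh_row_sum k i hi,
          Finset.sum_const, Finset.card_univ, Fintype.card_fin, nsmul_eq_mul]
        push_cast; ring
  _ ≤ _ := Finset.sum_le_sum fun ℓ _ => h ℓ

/-- **One-point extension lower bound (case `p = 2`):** any map `F` fixing the
truncated Walsh columns `v_ℓ`, defined on `{v_1,…,v_{2^k}} ∪ {0}` with Euclidean
source metric and `ℓ¹` target norm, with Lipschitz constant `L`, satisfies
`√(2 − 2^{1−k}) · √(2^{k−1}) ≤ L` (here `Lip f = √(2^{k−1})`). -/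
theorem walsh_one_point_extension_lower_bound (k : ℕ) (hk : 1 ≤ k)
    (F : (Fin (2 ^ k - 1) → ℝ) → (Fin (2 ^ k - 1) → ℝ))
    (hF : ∀ ℓ : Fin (2 ^ k), F (walshCol k ℓ) = walshCol k ℓ)
    (L : ℝ)
    (hL : ∀ x ∈ {v : Fin (2 ^ k - 1) → ℝ | (∃ ℓ, v = walshCol k ℓ) ∨ v = 0},
          ∀ y ∈ {v : Fin (2 ^ k - 1) → ℝ | (∃ ℓ, v = walshCol k ℓ) ∨ v = 0},
      ∑ r, |F x r - F y r| ≤ L * Real.sqrt (∑ r, (x r - y r) ^ 2)) :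
    Real.sqrt (2 - 1 / 2 ^ (k - 1)) * Real.sqrt (2 ^ (k - 1)) ≤ L := by

  have h1 : (1:ℕ) ≤ 2^k := Nat.one_le_two_pow
  set z := F 0 with hz
  have hstep : ∀ ℓ : Fin (2^k), ∑ r, |walshCol k ℓ r - z r| ≤ L * Real.sqrt ((2:ℝ)^k - 1) := by
    intro ℓ
    have h := hL (walshCol k ℓ) (Or.inl ⟨ℓ, rfl⟩) 0 (Or.inr rfl)
    rw [hF ℓ] at h
    have hsq : ∑ r, (walshCol k ℓ r - (0 : Fin (2^k-1) → ℝ) r)^2 = (2:ℝ)^k - 1 := by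
      simpa using walshCol_sq_sum k ℓ
    rwa [hsq] at h
  have hlow : ((2:ℝ)^k - 1) * 2^k ≤ ∑ ℓ : Fin (2^k), ∑ r, |walshCol k ℓ r - z r| := by
    rw [Finset.sum_comm]
    have hco : ∀ r : Fin (2^k-1), (2:ℝ)^k ≤ ∑ ℓ, |walshCol k ℓ r - z r| := by
      intro r
      apply key_coord
      intro h0
      have := congrArg Fin.val h0
      simp [Fin.val_succ] at this
    calc ((2:ℝ)^k - 1) * 2^k = ∑ _r : Fin (2^k-1), (2:ℝ)^k := by
          rw [Finset.sum_const, Finset.card_univ, Fintype.card_fin, nsmul_eq_mul,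
            Nat.cast_sub h1]
          push_cast; ring
    _ ≤ _ := Finset.sum_le_sum fun r _ => hco r
  have hup : ∑ ℓ : Fin (2^k), ∑ r, |walshCol k ℓ r - z r|
      ≤ (L * Real.sqrt ((2:ℝ)^k - 1)) * 2^k := by
    calc _ ≤ ∑ _ℓ : Fin (2^k), L * Real.sqrt ((2:ℝ)^k - 1) :=
          Finset.sum_le_sum fun ℓ _ => hstep ℓ
    _ = _ := by
        rw [Finset.sum_const, Finset.card_univ, Fintype.card_fin, nsmul_eq_mul]
        push_cast; ring
  have hpk : (0:ℝ) < 2^k := by positivity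
  have h2k : (2:ℝ) ≤ (2:ℝ)^k := by
    calc (2:ℝ) = 2^1 := (pow_one 2).symm
    _ ≤ 2^k := pow_le_pow_right₀ one_le_two hk
  have hL1 : (2:ℝ)^k - 1 ≤ L * Real.sqrt ((2:ℝ)^k - 1) :=
    le_of_mul_le_mul_right (hlow.trans hup) hpk
  have hs : Real.sqrt ((2:ℝ)^k - 1) ≤ L := by
    have hspos : 0 < Real.sqrt ((2:ℝ)^k - 1) := Real.sqrt_pos.mpr (by linarith)
    have hsq : Real.sqrt ((2:ℝ)^k - 1) * Real.sqrt ((2:ℝ)^k - 1) = (2:ℝ)^k - 1 :=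
      Real.mul_self_sqrt (by linarith)
    nlinarith
  have h2m : (1:ℝ) ≤ 2^(k-1) := by
    simpa using pow_le_pow_right₀ (by norm_num : (1:ℝ) ≤ 2) (Nat.zero_le (k-1))
  have hdiv : 1/(2:ℝ)^(k-1) ≤ 1 := by
    rw [div_le_one (by positivity)]; exact h2m
  have heq : Real.sqrt (2 - 1 / 2 ^ (k - 1)) * Real.sqrt (2 ^ (k - 1))
      = Real.sqrt ((2:ℝ)^k - 1) := by
    rw [← Real.sqrt_mul (by linarith)]
    congr 1
    obtain ⟨m, rfl⟩ : ∃ m, k = m + 1 := ⟨k-1, (Nat.succ_pred_eq_of_pos hk).symm⟩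
    have hp : (0:ℝ) < 2^m := by positivity
    simp only [Nat.add_sub_cancel, pow_succ]
    field_simp
  linarith [heq ▸ hs]
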